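/- arXiv:2202.03408 — 4 statements merged into one kernel-verified Lean document; each statement's English description precedes it below -/
import Mathlib

section
/- Let w, w*, τ be square-integrable random variables with ε = w - w*, Cov(w, ε) = 0, Var(w*) > 0, Var(τ) > 0, Var(ε) > 0. Let R² = Var(ε)/Var(w*). Then cor(ε, τ) = cor(w, τ)·√((1-R²)/R²) − cor(w*, τ)·√(1/R²). -/
/-!
Since `w* = w - ε` with `Cov(w, ε) = 0`, `Var w* = Var w + Var ε`, so `(1 - R²)/R² = Var w / Var ε`
and `1/R² = Var w* / Var ε`. Multiplying `cor(X, τ)` by `√(Var X / Var ε)` turns it into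
`Cov(X, τ) / √(Var ε · Var τ)`, and the identity becomes `Cov(ε, τ) = Cov(w, τ) - Cov(w*, τ)`.
-/

open MeasureTheory ProbabilityTheory

noncomputable def cov {Ω : Type*} [MeasureSpace Ω] (X Y : Ω → ℝ) : ℝ :=
  ∫ ω, (X ω - ∫ a, X a) * (Y ω - ∫ a, Y a)

noncomputable def cor {Ω : Type*} [MeasureSpace Ω] (X Y : Ω → ℝ) : ℝ :=
  cov X Y / Real.sqrt (variance X volume * variance Y volume)

section

variable {Ω : Type*}

lemma cov_eq_covariance [MeasureSpace Ω] (X Y : Ω → ℝ) : cov X Y = cov[X, Y] := rfl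

lemma covariance_eq_zero_of_variance_eq_zero [MeasurableSpace Ω] {μ : Measure Ω}
    [IsFiniteMeasure μ] {X : Ω → ℝ} (hX : MemLp X 2 μ) (h : Var[X; μ] = 0) (Y : Ω → ℝ) :
    cov[X, Y; μ] = 0 := by
  refine integral_eq_zero_of_ae ?_
  filter_upwards [ae_eq_integral_of_variance_eq_zero hX h] with ω hω
  simp [hω]

lemma variance_sub_of_covariance_eq_zero [MeasurableSpace Ω] {μ : Measure Ω}
    [IsFiniteMeasure μ] {X Y : Ω → ℝ} (hX : MemLp X 2 μ) (hY : MemLp Y 2 μ)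
    (h : cov[X, Y; μ] = 0) :
    Var[fun ω ↦ X ω - Y ω; μ] = Var[X; μ] + Var[Y; μ] := by
  rw [variance_fun_sub hX hY, h]
  ring

-- No sign condition on `c`: for `c ≤ 0` both square roots are `0` and both sides vanish.
lemma cor_mul_sqrt_variance_div [MeasureSpace Ω] [IsFiniteMeasure (volume : Measure Ω)]
    {X : Ω → ℝ} (hX : MemLp X 2 volume) (Y : Ω → ℝ) (c : ℝ) :
    cor X Y * √(Var[X] / c) = cov X Y / √(c * Var[Y]) := by
  rcases (variance_nonneg X volume).eq_or_lt with hX0 | hXpos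
  · rw [cov_eq_covariance, covariance_eq_zero_of_variance_eq_zero hX hX0.symm, ← hX0]
    simp
  · have hsX : √(Var[X]) ≠ 0 := (Real.sqrt_pos.2 hXpos).ne'
    rw [cor, Real.sqrt_mul hXpos.le, Real.sqrt_div hXpos.le, Real.sqrt_mul' c (variance_nonneg Y _),
      div_mul_div_comm, mul_comm (cov X Y), mul_assoc, mul_div_mul_left _ _ hsX, mul_comm (√c)]

end

theorem correlation_decomposition_general {Ω : Type*} [MeasureSpace Ω]
    [IsProbabilityMeasure (volume : Measure Ω)]
    (w wstar τ ε : Ω → ℝ)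
    (hw : MemLp w 2 volume) (hwstar : MemLp wstar 2 volume) (hτ : MemLp τ 2 volume)
    (hε : ε = fun ω => w ω - wstar ω)
    (hcov : cov w ε = 0)
    (hvarwstar : 0 < variance wstar volume)
    (R2 : ℝ) (hR2 : R2 = variance ε volume / variance wstar volume) :
    cor ε τ = cor w τ * Real.sqrt ((1 - R2) / R2) - cor wstar τ * Real.sqrt (1 / R2) := by
  have hεL2 : MemLp ε 2 volume := hε ▸ hw.sub hwstar
  have hwstar_eq : wstar = fun ω => w ω - ε ω := by
    subst hε
    simp
  have hvar : Var[wstar] = Var[w] + Var[ε] := by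
    rw [hwstar_eq]
    exact variance_sub_of_covariance_eq_zero hw hεL2 hcov
  have hcovε : cov ε τ = cov w τ - cov wstar τ := by
    subst hε
    exact covariance_fun_sub_left hw hwstar hτ
  have hratio : (1 - R2) / R2 = Var[w] / Var[ε] := by
    rw [hR2, one_sub_div hvarwstar.ne', div_div_div_cancel_right₀ hvarwstar.ne', hvar,
      add_sub_cancel_right]
  rw [hratio, hR2, one_div_div, cor_mul_sqrt_variance_div hw, cor_mul_sqrt_variance_div hwstar,
    ← sub_div, ← hcovε, cor]

/-- Correlation decomposition:
`cor(ε, τ) = cor(w, τ)·√((1-R²)/R²) − cor(w*, τ)·√(1/R²)`. -/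
theorem correlation_decomposition {Ω : Type*} [MeasureSpace Ω]
    [IsProbabilityMeasure (volume : Measure Ω)]
    (w wstar τ ε : Ω → ℝ)
    (hw : MemLp w 2 volume) (hwstar : MemLp wstar 2 volume) (hτ : MemLp τ 2 volume)
    (hε : ε = fun ω => w ω - wstar ω)
    (hcov : cov w ε = 0)
    (hvarwstar : 0 < variance wstar volume)
    (hvarτ : 0 < variance τ volume)
    (hvarε : 0 < variance ε volume)
    (R2 : ℝ) (hR2 : R2 = variance ε volume / variance wstar volume) :
    cor ε τ = cor w τ * Real.sqrt ((1 - R2) / R2) - cor wstar τ * Real.sqrt (1 / R2) :=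
  correlation_decomposition_general w wstar τ ε hw hwstar hτ hε hcov hvarwstar R2 hR2
end

section
/- For any three square-integrable random variables a, b, c with strictly positive variances, cor(a,b)·cor(b,c) − √(1−cor(a,b)²)·√(1−cor(b,c)²) ≤ cor(a,c) ≤ cor(a,b)·cor(b,c) + √(1−cor(a,b)²)·√(1−cor(b,c)²). -/
/-!
Pearson correlations are cosines of angles in `L²`: `cor X Y = cos ∠(X - 𝔼X, Y - 𝔼Y)`, and then
`√(1 - cor²)` is the sine of the same angle, since angles lie in `[0, π]`. With `α = ∠(a, b)`,
`β = ∠(b, c)`, `γ = ∠(a, c)` the two bounds read `cos (α + β) ≤ cos γ ≤ cos (α - β)`, which is the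
triangle inequality for angles, `|α - β| ≤ γ ≤ min (α + β) (2π - α - β)`.
-/

open MeasureTheory ProbabilityTheory

open Real InnerProductGeometry

namespace InnerProductGeometry

variable {V : Type*} [NormedAddCommGroup V] [InnerProductSpace ℝ V]

theorem cos_angle_le_cos_sub_angle (x y z : V) :
    cos (angle x z) ≤ cos (angle x y - angle y z) := by
  have hxy := angle_le_angle_add_angle x z y
  have hyz := angle_le_angle_add_angle y x z
  rw [angle_comm z y] at hxy
  rw [angle_comm y x] at hyz
  rw [← cos_abs (angle x y - angle y z)]
  exact cos_le_cos_of_nonneg_of_le_pi (abs_nonneg _) (angle_le_pi x z)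
    (abs_sub_le_iff.2 ⟨by linarith, by linarith⟩)

theorem cos_add_angle_le_cos_angle (x y z : V) :
    cos (angle x y + angle y z) ≤ cos (angle x z) := by
  have hsum := angle_le_angle_add_angle x y z
  -- through `-y` the triangle inequality gives `∠ x z ≤ 2π - (∠ x y + ∠ y z)`
  have hneg := angle_le_angle_add_angle x (-y) z
  rw [angle_neg_right, angle_neg_left] at hneg
  rcases le_total (angle x y + angle y z) π with h | h
  · exact cos_le_cos_of_nonneg_of_le_pi (angle_nonneg x z) h hsum
  · rw [← cos_two_pi_sub]
    exact cos_le_cos_of_nonneg_of_le_pi (angle_nonneg x z) (by linarith) (by linarith)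

theorem sqrt_one_sub_cos_angle_sq (x y : V) : √(1 - cos (angle x y) ^ 2) = sin (angle x y) :=
  (sin_eq_sqrt_one_sub_cos_sq (angle_nonneg x y) (angle_le_pi x y)).symm

end InnerProductGeometry

namespace MeasureTheory.MemLp

variable {Ω : Type*} [MeasurableSpace Ω] {μ : Measure Ω} [IsFiniteMeasure μ] {X Y : Ω → ℝ}

noncomputable def centeredLp (hX : MemLp X 2 μ) : Lp ℝ 2 μ :=
  (hX.sub (memLp_const μ[X])).toLp _

theorem inner_centeredLp (hX : MemLp X 2 μ) (hY : MemLp Y 2 μ) :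
    inner ℝ hX.centeredLp hY.centeredLp = covariance X Y μ := by
  rw [L2.inner_def, covariance]
  refine integral_congr_ae ?_
  filter_upwards [(hX.sub (memLp_const μ[X])).coeFn_toLp,
    (hY.sub (memLp_const μ[Y])).coeFn_toLp] with ω hXω hYω
  simp [centeredLp, hXω, hYω, mul_comm]

theorem norm_centeredLp_sq (hX : MemLp X 2 μ) : ‖hX.centeredLp‖ ^ 2 = variance X μ := by
  rw [← real_inner_self_eq_norm_sq, inner_centeredLp, covariance_self hX.aemeasurable]

end MeasureTheory.MemLp

theorem cor_eq_cos_angle {Ω : Type*} [MeasureSpace Ω] [IsFiniteMeasure (volume : Measure Ω)]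
    {X Y : Ω → ℝ} (hX : MemLp X 2 volume) (hY : MemLp Y 2 volume) :
    cor X Y = cos (angle hX.centeredLp hY.centeredLp) := by
  rw [cor, cos_angle, hX.inner_centeredLp, ← sqrt_sq (by positivity : 0 ≤ ‖hX.centeredLp‖ * _),
    mul_pow, hX.norm_centeredLp_sq, hY.norm_centeredLp_sq]
  rfl

theorem correlation_recursive_bound_general {Ω : Type*} [MeasureSpace Ω]
    [IsProbabilityMeasure (volume : Measure Ω)]
    (a b c : Ω → ℝ)
    (ha : MemLp a 2 volume) (hb : MemLp b 2 volume) (hc : MemLp c 2 volume) :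
    cor a b * cor b c - Real.sqrt (1 - (cor a b)^2) * Real.sqrt (1 - (cor b c)^2)
        ≤ cor a c ∧
    cor a c
        ≤ cor a b * cor b c + Real.sqrt (1 - (cor a b)^2) * Real.sqrt (1 - (cor b c)^2) := by
  rw [cor_eq_cos_angle ha hb, cor_eq_cos_angle hb hc, cor_eq_cos_angle ha hc,
    sqrt_one_sub_cos_angle_sq, sqrt_one_sub_cos_angle_sq, ← cos_add, ← cos_sub]
  exact ⟨cos_add_angle_le_cos_angle _ _ _, cos_angle_le_cos_sub_angle _ _ _⟩

/-- Recursive partial-correlation bound: for square-integrable `a, b, c` with positive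
variances, `cor(a,c)` lies within
`cor(a,b)·cor(b,c) ± √(1−cor(a,b)²)·√(1−cor(b,c)²)`. -/
theorem correlation_recursive_bound {Ω : Type*} [MeasureSpace Ω]
    [IsProbabilityMeasure (volume : Measure Ω)]
    (a b c : Ω → ℝ)
    (ha : MemLp a 2 volume) (hb : MemLp b 2 volume) (hc : MemLp c 2 volume)
    (hva : 0 < variance a volume) (hvb : 0 < variance b volume)
    (hvc : 0 < variance c volume) :
    cor a b * cor b c - Real.sqrt (1 - (cor a b)^2) * Real.sqrt (1 - (cor b c)^2)
        ≤ cor a c ∧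
    cor a c
        ≤ cor a b * cor b c + Real.sqrt (1 - (cor a b)^2) * Real.sqrt (1 - (cor b c)^2) :=
  correlation_recursive_bound_general a b c ha hb hc
end

section
/- Let S be an event with 0 < P(S) < 1 and let X be a random variable such that 0 < P(S|X) < 1 almost surely. Define w = (P(S)/P(S^c))·(P(S^c|X)/P(S|X)). If additionally U is a discrete random variable, then w − (P(S)/P(S^c))·(P(S^c|X,U)/P(S|X,U)) = w · (P(U|X,S) − P(U|X,S^c))/P(U|X,S), whenever P(U|X,S) > 0. -/
open MeasureTheory

/-- `pr A` is the probability of the event `A`. -/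
noncomputable def pr {Ω : Type*} [MeasureSpace Ω] (A : Set Ω) : ℝ := (volume A).toReal

lemma pr_nonneg {Ω : Type*} [MeasureSpace Ω] (A : Set Ω) : 0 ≤ pr A :=
  ENNReal.toReal_nonneg

lemma pr_inter_add_compl_inter {Ω : Type*} [MeasureSpace Ω]
    [IsProbabilityMeasure (volume : Measure Ω)]
    (S T : Set Ω) (hS : MeasurableSet S) :
    pr (S ∩ T) + pr (Sᶜ ∩ T) = pr T := by
  unfold pr
  rw [Set.inter_comm S T, Set.inter_comm Sᶜ T, ← Set.diff_eq,
    ← ENNReal.toReal_add (measure_ne_top _ _) (measure_ne_top _ _),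
    measure_inter_add_diff T hS]

lemma div_pos_facts {a p : ℝ} (h : 0 < a / p) (ha : 0 ≤ a) (hp : 0 ≤ p) :
    0 < a ∧ 0 < p := by
  rcases eq_or_lt_of_le hp with hp0 | hp0
  · rw [← hp0, div_zero] at h; exact absurd h (lt_irrefl 0)
  · refine ⟨?_, hp0⟩
    have := mul_pos h hp0
    rwa [div_mul_cancel₀ a hp0.ne'] at this

/-- Error decomposition for inverse propensity weights (pointwise, at `X = x`, `U = u`):
`w − (P(S)/P(Sᶜ))·(P(Sᶜ|X,U)/P(S|X,U)) = w·(P(U|X,S) − P(U|X,Sᶜ))/P(U|X,S)`, where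
`w = (P(S)/P(Sᶜ))·(P(Sᶜ|X)/P(S|X))`. -/
theorem error_decomposition {Ω α β : Type*} [MeasureSpace Ω]
    [IsProbabilityMeasure (volume : Measure Ω)]
    [MeasurableSpace α] [MeasurableSingletonClass α]
    [MeasurableSpace β] [MeasurableSingletonClass β]
    (S : Set Ω) (hS : MeasurableSet S)
    (X : Ω → α) (U : Ω → β) (hX : Measurable X) (hU : Measurable U)
    (x : α) (u : β)
    (hS01 : 0 < pr S ∧ pr S < 1)
    (hSX : 0 < pr (S ∩ X ⁻¹' {x}) / pr (X ⁻¹' {x}) ∧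
           pr (S ∩ X ⁻¹' {x}) / pr (X ⁻¹' {x}) < 1)
    (hSXU : 0 < pr (S ∩ X ⁻¹' {x} ∩ U ⁻¹' {u}) / pr (X ⁻¹' {x} ∩ U ⁻¹' {u}) ∧
            pr (S ∩ X ⁻¹' {x} ∩ U ⁻¹' {u}) / pr (X ⁻¹' {x} ∩ U ⁻¹' {u}) < 1)
    (hUXS : 0 < pr (U ⁻¹' {u} ∩ X ⁻¹' {x} ∩ S) / pr (X ⁻¹' {x} ∩ S)) :
    (pr S / pr Sᶜ) *
        (pr (Sᶜ ∩ X ⁻¹' {x}) / pr (X ⁻¹' {x}) / (pr (S ∩ X ⁻¹' {x}) / pr (X ⁻¹' {x})))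
      - (pr S / pr Sᶜ) *
          (pr (Sᶜ ∩ X ⁻¹' {x} ∩ U ⁻¹' {u}) / pr (X ⁻¹' {x} ∩ U ⁻¹' {u}) /
            (pr (S ∩ X ⁻¹' {x} ∩ U ⁻¹' {u}) / pr (X ⁻¹' {x} ∩ U ⁻¹' {u})))
      = (pr S / pr Sᶜ) *
          (pr (Sᶜ ∩ X ⁻¹' {x}) / pr (X ⁻¹' {x}) / (pr (S ∩ X ⁻¹' {x}) / pr (X ⁻¹' {x}))) *
          ((pr (U ⁻¹' {u} ∩ X ⁻¹' {x} ∩ S) / pr (X ⁻¹' {x} ∩ S)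
              - pr (U ⁻¹' {u} ∩ X ⁻¹' {x} ∩ Sᶜ) / pr (X ⁻¹' {x} ∩ Sᶜ))
            / (pr (U ⁻¹' {u} ∩ X ⁻¹' {x} ∩ S) / pr (X ⁻¹' {x} ∩ S))) := by
  -- set identities
  have e1 : X ⁻¹' {x} ∩ S = S ∩ X ⁻¹' {x} := Set.inter_comm _ _
  have e2 : X ⁻¹' {x} ∩ Sᶜ = Sᶜ ∩ X ⁻¹' {x} := Set.inter_comm _ _
  have e3 : U ⁻¹' {u} ∩ X ⁻¹' {x} ∩ S = S ∩ X ⁻¹' {x} ∩ U ⁻¹' {u} := by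
    ext ω; simp only [Set.mem_inter_iff]; tauto
  have e4 : U ⁻¹' {u} ∩ X ⁻¹' {x} ∩ Sᶜ = Sᶜ ∩ X ⁻¹' {x} ∩ U ⁻¹' {u} := by
    ext ω; simp only [Set.mem_inter_iff]; tauto
  rw [e1, e2, e3, e4]
  obtain ⟨haa, hpxx⟩ := div_pos_facts hSX.1 (pr_nonneg _) (pr_nonneg _)
  obtain ⟨haa', hpxuu⟩ := div_pos_facts hSXU.1 (pr_nonneg _) (pr_nonneg _)
  set a := pr (S ∩ X ⁻¹' {x}) with ha_def
  set b := pr (Sᶜ ∩ X ⁻¹' {x}) with hb_def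
  set px := pr (X ⁻¹' {x}) with hpx_def
  set a' := pr (S ∩ X ⁻¹' {x} ∩ U ⁻¹' {u}) with ha'_def
  set b' := pr (Sᶜ ∩ X ⁻¹' {x} ∩ U ⁻¹' {u}) with hb'_def
  set pxu := pr (X ⁻¹' {x} ∩ U ⁻¹' {u}) with hpxu_def
  -- positivity facts
  have ha : 0 < a := haa
  have hpx : 0 < px := hpxx
  have ha' : 0 < a' := haa'
  have hpxu : 0 < pxu := hpxuu
  have hab : a + b = px := pr_inter_add_compl_inter S (X ⁻¹' {x}) hS
  have hb : 0 < b := by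
    have : a < px := by
      have := (div_lt_one hpx).mp hSX.2
      exact this
    linarith
  have hsc : 0 < pr Sᶜ := by
    have h1 : pr S + pr Sᶜ = pr (Set.univ : Set Ω) := by
      have := pr_inter_add_compl_inter S Set.univ hS
      simpa [Set.inter_univ] using this
    have h2 : pr (Set.univ : Set Ω) = 1 := by
      unfold pr; simp
    linarith [hS01.2]
  -- `hUXS` now reads `0 < a' / a` after rewriting; not needed beyond positivity.
  field_simp
end

section
/- Let w, w*, τ be square-integrable with ε := w − w*, Cov(w, ε) = 0, Var(w*), Var(τ) > 0, and R² := Var(ε)/Var(w*) ∈ (0,1). Suppose Cov(w*, τ) ≠ 0. Then Cov(ε,τ) = Cov(w*,τ)·(√(1−R²)·cor(w,τ)/cor(w*,τ) − 1). -/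
open MeasureTheory ProbabilityTheory

section helpers
variable {Ω : Type*} [MeasureSpace Ω] [IsProbabilityMeasure (volume : Measure Ω)]

lemma mul_integrable {X Y : Ω → ℝ} (hX : MemLp X 2 volume) (hY : MemLp Y 2 volume) :
    Integrable (fun ω => X ω * Y ω) volume := by
  have h : MemLp (X • Y) 1 volume := hY.smul hX
    (hpqr := ⟨by rw [inv_one, ENNReal.inv_two_add_inv_two]⟩)
  exact (memLp_one_iff_integrable.mp h)

lemma centered_memLp {X : Ω → ℝ} (hX : MemLp X 2 volume) (c : ℝ) :
    MemLp (fun ω => X ω - c) 2 volume := hX.sub (memLp_const c)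

omit [IsProbabilityMeasure (volume : Measure Ω)] in
lemma cov_comm (X Y : Ω → ℝ) : cov X Y = cov Y X := by
  unfold cov; simp_rw [mul_comm]

lemma cov_sub_left {X Y Z : Ω → ℝ} (hX : MemLp X 2 volume) (hY : MemLp Y 2 volume)
    (hZ : MemLp Z 2 volume) :
    cov (fun ω => X ω - Y ω) Z = cov X Z - cov Y Z := by
  have hXi := hX.integrable one_le_two
  have hYi := hY.integrable one_le_two
  have hmean : (∫ a, (X a - Y a)) = (∫ a, X a) - ∫ a, Y a := integral_sub hXi hYi
  have h1 : Integrable (fun ω => (X ω - ∫ a, X a) * (Z ω - ∫ a, Z a)) volume :=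
    mul_integrable (centered_memLp hX _) (centered_memLp hZ _)
  have h2 : Integrable (fun ω => (Y ω - ∫ a, Y a) * (Z ω - ∫ a, Z a)) volume :=
    mul_integrable (centered_memLp hY _) (centered_memLp hZ _)
  unfold cov
  rw [hmean]
  have : ∀ ω, (X ω - Y ω - ((∫ a, X a) - ∫ a, Y a)) * (Z ω - ∫ a, Z a)
      = (X ω - ∫ a, X a) * (Z ω - ∫ a, Z a) - (Y ω - ∫ a, Y a) * (Z ω - ∫ a, Z a) := by
    intro ω; ring
  simp_rw [this]
  exact integral_sub h1 h2

lemma var_eq_cov {X : Ω → ℝ} (hX : MemLp X 2 volume) : variance X volume = cov X X := by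
  rw [variance_eq_integral hX.aemeasurable]
  unfold cov
  congr 1
  ext ω
  simp [sq]

end helpers

/-- Relative bias reduction identity:
`Cov(ε, τ) = Cov(w*, τ)·(√(1−R²)·cor(w,τ)/cor(w*,τ) − 1)`. -/
theorem relative_bias_reduction {Ω : Type*} [MeasureSpace Ω]
    [IsProbabilityMeasure (volume : Measure Ω)]
    (w wstar τ ε : Ω → ℝ)
    (hw : MemLp w 2 volume) (hwstar : MemLp wstar 2 volume) (hτ : MemLp τ 2 volume)
    (hε : ε = fun ω => w ω - wstar ω)
    (hcov : cov w ε = 0)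
    (hvarw : 0 < variance w volume)
    (hvarwstar : 0 < variance wstar volume)
    (hvarτ : 0 < variance τ volume)
    (R2 : ℝ) (hR2 : R2 = variance ε volume / variance wstar volume)
    (hR2mem : R2 ∈ Set.Ioo (0:ℝ) 1)
    (hcovwstar : cov wstar τ ≠ 0) :
    cov ε τ = cov wstar τ * (Real.sqrt (1 - R2) * cor w τ / cor wstar τ - 1) := by
  subst hε
  have hεL2 : MemLp (fun ω => w ω - wstar ω) 2 volume := hw.sub hwstar
  have hc1 : cov (fun ω => w ω - wstar ω) τ = cov w τ - cov wstar τ :=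
    cov_sub_left hw hwstar hτ
  rw [cov_comm] at hcov
  rw [cov_sub_left hw hwstar hw] at hcov
  -- hcov : cov w w - cov wstar w = 0
  have hvarε : variance (fun ω => w ω - wstar ω) volume
      = variance wstar volume - variance w volume := by
    rw [var_eq_cov hεL2, cov_sub_left hw hwstar hεL2,
      cov_comm w (fun ω => w ω - wstar ω), cov_comm wstar (fun ω => w ω - wstar ω),
      cov_sub_left hw hwstar hw, cov_sub_left hw hwstar hwstar,
      var_eq_cov hw, var_eq_cov hwstar, cov_comm wstar w] at *
    linarith
  have h1R2 : 1 - R2 = variance w volume / variance wstar volume := by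
    rw [hR2, hvarε]
    field_simp
    ring
  have hsqrt : Real.sqrt (1 - R2)
      = Real.sqrt (variance w volume) / Real.sqrt (variance wstar volume) := by
    rw [h1R2, Real.sqrt_div hvarw.le]
  have hsw : 0 < Real.sqrt (variance w volume) := Real.sqrt_pos.mpr hvarw
  have hsws : 0 < Real.sqrt (variance wstar volume) := Real.sqrt_pos.mpr hvarwstar
  have hst : 0 < Real.sqrt (variance τ volume) := Real.sqrt_pos.mpr hvarτ
  rw [hc1, hsqrt]
  unfold cor
  rw [Real.sqrt_mul hvarw.le, Real.sqrt_mul hvarwstar.le]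
  field_simp
end
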